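/- Let X be the Cantorval { ∑_{n≥1} x_n/4^n : ∀n, x_n ∈ {0,2,3,5} } and Z = [0, 5/3] \ interior(X). Then the center of distances of Z is {0}. -/

import Mathlib

noncomputable def centerOfDistances (X : Set ℝ) : Set ℝ :=
  {α | 0 ≤ α ∧ ∀ x ∈ X, ∃ y ∈ X, |x - y| = α}

noncomputable def subsums (a : ℕ → ℝ) : Set ℝ :=
  {x | ∃ A : Set ℕ, x = ∑' n : A, a n}

noncomputable def cantorval : Set ℝ :=
  {x | ∃ d : ℕ → ℝ, (∀ n, d n ∈ ({0, 2, 3, 5} : Set ℝ)) ∧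
    x = ∑' n : ℕ, d n / 4 ^ (n + 1)}

/-!
Write `X` for the Cantorval and `Z = [0, 5/3] \ int X`. A number `α > 0` is excluded from the
center of distances as soon as some `x ∈ Z` has both partners `x ± α` outside `Z`.

Since `X = ⋃_{δ ∈ {0,2,3,5}} (X + δ) / 4`, the map `x ↦ x / 4` sends `Z` into `Z` and `int X` into
`int X`. Hence a witness `x` for `α` with `x + α ∈ int X` gives the witness `x / 4` for `α / 4`,
and it suffices to treat `α ∈ (7/24, 7/6]`. There six explicit windows do the job: `x` lies in one
of the gaps `(5/12, 1/2)`, `(7/6, 5/4)` of `X` or in a rescaling of one by a power of `1/4`, while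
`x - α` is negative or in `int X` and `x + α` lies in an image of `(2/3, 1) ⊆ int X` under the
digit maps `y ↦ (y + δ) / 4`. For `α > 7/6`, any `x ∈ (5/12, 1/2)` with `x + α > 5/3` works.

The inclusion `[2/3, 1] ⊆ X` holds because `[0, 1]` is covered by five images of itself under
contractions of ratio `1/4`, each preserving the closed set `{w ∈ [0, 1] | w ∈ X ∨ 2/3 - w ∈ X}`.
-/

open Set Filter Topology Metric
open scoped NNReal

theorem subset_of_forall_mem_image_lipschitzWith {α : Type*} [PseudoMetricSpace α]
    {I T : Set α} {r : ℝ≥0} (hr : r < 1) (hI : Bornology.IsBounded I) (hT : IsClosed T)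
    (hTI : T ⊆ I) (hTne : T.Nonempty)
    (hcover : ∀ x ∈ I, ∃ f : α → α, LipschitzWith r f ∧ MapsTo f T T ∧ x ∈ f '' I) :
    I ⊆ T := by
  have approx : ∀ n : ℕ, ∀ x ∈ I, ∃ t ∈ T, dist x t ≤ r ^ n * diam I := by
    intro n
    induction n with
    | zero =>
      obtain ⟨t, ht⟩ := hTne
      exact fun x hx => ⟨t, ht, by simpa using dist_le_diam_of_mem hI hx (hTI ht)⟩
    | succ n ih =>
      rintro _ hx
      obtain ⟨f, hf, hfT, y, hy, rfl⟩ := hcover _ hx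
      obtain ⟨t, ht, hyt⟩ := ih y hy
      refine ⟨f t, hfT ht, ?_⟩
      calc dist (f y) (f t) ≤ r * dist y t := hf.dist_le_mul y t
        _ ≤ r * (r ^ n * diam I) := by gcongr
        _ = r ^ (n + 1) * diam I := by ring
  intro x hx
  rw [← hT.closure_eq, Metric.mem_closure_iff]
  intro ε hε
  have hlim : Tendsto (fun n : ℕ => (r : ℝ) ^ n * diam I) atTop (𝓝 0) := by
    simpa using (tendsto_pow_atTop_nhds_zero_of_lt_one r.2 hr).mul_const (diam I)
  obtain ⟨n, hn⟩ := (hlim.eventually (gt_mem_nhds hε)).exists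
  obtain ⟨t, ht, hxt⟩ := approx n x hx
  exact ⟨t, ht, hxt.trans_lt hn⟩

theorem zero_mem_centerOfDistances (C : Set ℝ) : 0 ∈ centerOfDistances C :=
  ⟨le_rfl, fun x hx => ⟨x, hx, by simp⟩⟩

theorem not_mem_centerOfDistances {C : Set ℝ} {α x : ℝ} (hx : x ∈ C) (hl : x - α ∉ C)
    (hr : x + α ∉ C) : α ∉ centerOfDistances C := by
  rintro ⟨hα, hC⟩
  obtain ⟨y, hy, hxy⟩ := hC x hx
  rcases (abs_eq hα).1 hxy with h | h
  · exact hl (by rwa [show x - α = y by linarith])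
  · exact hr (by rwa [show x + α = y by linarith])

namespace Cantorval

abbrev digits : Set ℝ := {0, 2, 3, 5}

theorem zero_mem_digits : (0 : ℝ) ∈ digits := by simp
theorem two_mem_digits : (2 : ℝ) ∈ digits := by simp
theorem three_mem_digits : (3 : ℝ) ∈ digits := by simp
theorem five_mem_digits : (5 : ℝ) ∈ digits := by simp

theorem digits_subset_Icc : digits ⊆ Icc 0 5 := by
  rintro t (rfl | rfl | rfl | rfl) <;> norm_num

theorem five_sub_mem_digits {δ : ℝ} (hδ : δ ∈ digits) : 5 - δ ∈ digits := by
  rcases hδ with rfl | rfl | rfl | rfl <;> norm_num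

theorem hasSum_const_div_four_pow (c : ℝ) : HasSum (fun n : ℕ => c / 4 ^ (n + 1)) (c / 3) := by
  have hterm : (fun n : ℕ => c / 4 ^ (n + 1)) = fun n => c / 4 * (1 / 4) ^ n := by
    funext n; rw [pow_succ, one_div, inv_pow]; field_simp
  rw [hterm, show c / 3 = c / 4 * (1 - 1 / 4)⁻¹ by norm_num; ring]
  exact (hasSum_geometric_of_lt_one (by norm_num) (by norm_num)).mul_left (c / 4)

theorem summable_digit_series {d : ℕ → ℝ} (hd : ∀ n, d n ∈ digits) :
    Summable fun n => d n / 4 ^ (n + 1) :=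
  .of_nonneg_of_le (fun n => div_nonneg (digits_subset_Icc (hd n)).1 (by positivity))
    (fun n => div_le_div_of_nonneg_right (digits_subset_Icc (hd n)).2 (by positivity))
    (hasSum_const_div_four_pow 5).summable

theorem const_div_three_mem {c : ℝ} (hc : c ∈ digits) : c / 3 ∈ cantorval :=
  ⟨fun _ => c, fun _ => hc, (hasSum_const_div_four_pow c).tsum_eq.symm⟩

theorem cantorval_subset_Icc : cantorval ⊆ Icc 0 (5 / 3) := by
  rintro _ ⟨d, hd, rfl⟩
  have hs := (summable_digit_series hd).hasSum
  exact ⟨hs.nonneg fun n => div_nonneg (digits_subset_Icc (hd n)).1 (by positivity),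
    hasSum_le (fun n => div_le_div_of_nonneg_right (digits_subset_Icc (hd n)).2
    (by positivity)) hs (hasSum_const_div_four_pow 5)⟩

theorem mem_cantorval_iff {x : ℝ} :
    x ∈ cantorval ↔ ∃ δ ∈ digits, ∃ y ∈ cantorval, x = (y + δ) / 4 := by
  constructor
  · rintro ⟨d, hd, rfl⟩
    refine ⟨d 0, hd 0, _, ⟨fun n => d (n + 1), fun n => hd (n + 1), rfl⟩, ?_⟩
    have shift : ∀ n : ℕ, d (n + 1) / 4 ^ (n + 1 + 1) = d (n + 1) / 4 ^ (n + 1) / 4 :=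
      fun n => by ring
    rw [(summable_digit_series hd).tsum_eq_zero_add]
    simp only [shift, tsum_div_const]
    ring
  · rintro ⟨δ, hδ, y, ⟨d, hd, rfl⟩, rfl⟩
    let d' : ℕ → ℝ := fun n => Nat.casesOn n δ d
    have hd' : ∀ n, d' n ∈ digits := fun n => by cases n <;> simp [d', hδ, hd]
    refine ⟨d', hd', ?_⟩
    have shift : ∀ n : ℕ, d n / 4 ^ (n + 1 + 1) = d n / 4 ^ (n + 1) / 4 := fun n => by ring
    rw [(summable_digit_series hd').tsum_eq_zero_add]
    change _ = δ / 4 ^ (0 + 1) + ∑' n, d n / 4 ^ (n + 1 + 1)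
    simp only [shift, tsum_div_const]
    ring

theorem digit_map_mem {y δ x : ℝ} (hy : y ∈ cantorval) (hδ : δ ∈ digits)
    (hx : x = (y + δ) / 4) : x ∈ cantorval :=
  mem_cantorval_iff.2 ⟨δ, hδ, y, hy, hx⟩

theorem five_thirds_sub_mem {x : ℝ} (hx : x ∈ cantorval) : 5 / 3 - x ∈ cantorval := by
  obtain ⟨d, hd, rfl⟩ := hx
  refine ⟨fun n => 5 - d n, fun n => five_sub_mem_digits (hd n), ?_⟩
  simp only [sub_div]
  rw [(hasSum_const_div_four_pow 5).summable.tsum_sub (summable_digit_series hd),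
    (hasSum_const_div_four_pow 5).tsum_eq]

theorem isCompact_cantorval : IsCompact cantorval := by
  have hD : IsCompact (univ.pi fun _ : ℕ => digits) :=
    isCompact_univ_pi fun _ => (toFinite digits).isCompact
  have hcont : ContinuousOn (fun d : ℕ → ℝ => ∑' n, d n / 4 ^ (n + 1))
      (univ.pi fun _ => digits) := by
    refine continuousOn_tsum (fun n => ((continuous_apply n).div_const _).continuousOn)
      (hasSum_const_div_four_pow 5).summable fun n d hd => ?_
    have h := digits_subset_Icc (hd n (mem_univ n))
    rw [Real.norm_eq_abs, abs_of_nonneg (div_nonneg h.1 (by positivity))]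
    exact div_le_div_of_nonneg_right h.2 (by positivity)
  convert hD.image_of_continuousOn hcont
  ext x
  simp only [cantorval, mem_image, mem_univ_pi]
  exact ⟨fun ⟨d, hd, hx⟩ => ⟨d, hd, hx.symm⟩, fun ⟨d, hd, hx⟩ => ⟨d, hd, hx.symm⟩⟩

theorem le_five_twelfths_or_mem_Icc_or_five_fourths_le {x : ℝ} (hx : x ∈ cantorval) :
    x ≤ 5 / 12 ∨ x ∈ Icc (1 / 2) (7 / 6) ∨ 5 / 4 ≤ x := by
  obtain ⟨δ, hδ, y, hy, rfl⟩ := mem_cantorval_iff.1 hx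
  have := cantorval_subset_Icc hy
  rcases hδ with rfl | rfl | rfl | rfl
  · left; linarith [this.2]
  · right; left; constructor <;> linarith [this.1, this.2]
  · right; left; constructor <;> linarith [this.1, this.2]
  · right; right; linarith [this.1]

theorem four_mul_mem {x : ℝ} (hx : x ∈ cantorval) (hx' : x < 1 / 2) : 4 * x ∈ cantorval := by
  obtain ⟨δ, hδ, y, hy, rfl⟩ := mem_cantorval_iff.1 hx
  have hy0 := (cantorval_subset_Icc hy).1
  rcases hδ with rfl | rfl | rfl | rfl
  · convert hy using 1; ring
  all_goals norm_num at hx'; linarith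

theorem lipschitzWith_add_div_four (c : ℝ) : LipschitzWith (1 / 4) fun w : ℝ => (w + c) / 4 :=
  LipschitzWith.of_dist_le_mul fun u v => by
    rw [Real.dist_eq, Real.dist_eq, show (u + c) / 4 - (v + c) / 4 = (u - v) / 4 by ring,
      abs_div, abs_of_pos (four_pos : (0 : ℝ) < 4)]
    push_cast
    linarith

theorem lipschitzWith_sub_div_four (c : ℝ) : LipschitzWith (1 / 4) fun w : ℝ => (c - w) / 4 :=
  LipschitzWith.of_dist_le_mul fun u v => by
    rw [Real.dist_eq, Real.dist_eq, show (c - u) / 4 - (c - v) / 4 = -((u - v) / 4) by ring,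
      abs_neg, abs_div, abs_of_pos (four_pos : (0 : ℝ) < 4)]
    push_cast
    linarith

theorem mem_or_two_thirds_sub_mem_of_mem_Icc :
    Icc (0 : ℝ) 1 ⊆ {w | w ∈ cantorval ∨ 2 / 3 - w ∈ cantorval} := by
  set T := Icc (0 : ℝ) 1 ∩ {w | w ∈ cantorval ∨ 2 / 3 - w ∈ cantorval}
  have hT : IsClosed T := isClosed_Icc.inter <| isCompact_cantorval.isClosed.union <|
    isCompact_cantorval.isClosed.preimage (by fun_prop)
  have hTne : T.Nonempty :=
    ⟨0, ⟨le_rfl, zero_le_one⟩, Or.inl (by simpa using const_div_three_mem zero_mem_digits)⟩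
  refine fun x hx => (subset_of_forall_mem_image_lipschitzWith (r := 1 / 4) (by norm_num)
    (isBounded_Icc 0 1) hT inter_subset_left hTne ?_ hx).2
  rintro x ⟨hx0, hx1⟩
  rcases le_or_gt x (1 / 4) with h₁ | h₁
  · refine ⟨_, lipschitzWith_add_div_four 0, ?_, 4 * x, ⟨by linarith, by linarith⟩, by ring⟩
    rintro w ⟨⟨h0, h1⟩, hw | hw⟩
    · exact ⟨⟨by linarith, by linarith⟩, .inl (digit_map_mem hw zero_mem_digits rfl)⟩
    · exact ⟨⟨by linarith, by linarith⟩, .inr (digit_map_mem hw two_mem_digits (by ring))⟩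
  rcases le_or_gt x (5 / 12) with h₂ | h₂
  · refine ⟨_, lipschitzWith_sub_div_four (5 / 3), ?_, 5 / 3 - 4 * x,
      ⟨by linarith, by linarith⟩, by ring⟩
    rintro w ⟨⟨h0, h1⟩, hw | hw⟩ <;> refine ⟨⟨by linarith, by linarith⟩, ?_⟩
    · exact .inl (digit_map_mem (five_thirds_sub_mem hw) zero_mem_digits (by ring))
    · exact .inr (digit_map_mem (five_thirds_sub_mem hw) zero_mem_digits (by ring))
  rcases le_or_gt x (2 / 3) with h₃ | h₃
  · refine ⟨_, lipschitzWith_sub_div_four (8 / 3), ?_, 8 / 3 - 4 * x,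
      ⟨by linarith, by linarith⟩, by ring⟩
    rintro w ⟨⟨h0, h1⟩, hw | hw⟩ <;> refine ⟨⟨by linarith, by linarith⟩, ?_⟩
    · exact .inr (digit_map_mem hw zero_mem_digits (by ring))
    · exact .inl (digit_map_mem hw two_mem_digits (by ring))
  rcases le_or_gt x (3 / 4) with h₄ | h₄
  · refine ⟨_, lipschitzWith_add_div_four 2, ?_, 4 * x - 2, ⟨by linarith, by linarith⟩, by ring⟩
    rintro w ⟨⟨h0, h1⟩, hw | hw⟩ <;> refine ⟨⟨by linarith, by linarith⟩, ?_⟩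
    · exact .inl (digit_map_mem hw two_mem_digits rfl)
    · exact .inr (digit_map_mem hw zero_mem_digits (by ring))
  · refine ⟨_, lipschitzWith_add_div_four 3, ?_, 4 * x - 3, ⟨by linarith, by linarith⟩, by ring⟩
    rintro w ⟨⟨h0, h1⟩, hw | hw⟩ <;> refine ⟨⟨by linarith, by linarith⟩, ?_⟩
    · exact .inl (digit_map_mem hw three_mem_digits rfl)
    · exact .inl (digit_map_mem (five_thirds_sub_mem hw) two_mem_digits (by ring))

theorem Icc_subset_cantorval : Icc (2 / 3 : ℝ) 1 ⊆ cantorval := by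
  intro x hx
  rcases mem_or_two_thirds_sub_mem_of_mem_Icc ⟨by linarith [hx.1], hx.2⟩ with h | h
  · exact h
  · obtain rfl : x = 2 / 3 := by linarith [hx.1, (cantorval_subset_Icc h).1]
    simpa using const_div_three_mem two_mem_digits

theorem mapsTo_interior_digit_map {δ : ℝ} (hδ : δ ∈ digits) :
    MapsTo (fun y => (y + δ) / 4) (interior cantorval) (interior cantorval) :=
  (IsOpenMap.of_inverse (f' := fun x => 4 * x - δ) (by fun_prop) (fun x => by ring)
    (fun x => by ring)).mapsTo_interior fun _ hy => digit_map_mem hy hδ rfl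

theorem Ioo_digit_map_subset_interior {a b δ : ℝ} (h : Ioo a b ⊆ interior cantorval)
    (hδ : δ ∈ digits) : Ioo ((a + δ) / 4) ((b + δ) / 4) ⊆ interior cantorval := by
  rintro x ⟨hax, hxb⟩
  convert mapsTo_interior_digit_map hδ (h ⟨by linarith, by linarith⟩ : 4 * x - δ ∈ _) using 1
  ring

theorem Ioo_subset_interior : Ioo (2 / 3 : ℝ) 1 ⊆ interior cantorval :=
  interior_maximal (Ioo_subset_Icc_self.trans Icc_subset_cantorval) isOpen_Ioo

theorem mem_interior_of_div_four_mem_interior {x : ℝ} (hx : x < 2)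
    (h : x / 4 ∈ interior cantorval) : x ∈ interior cantorval := by
  have hmaps : MapsTo (4 * ·) (interior cantorval ∩ Iio (1 / 2)) cantorval :=
    fun y hy => four_mul_mem (interior_subset hy.1) hy.2
  have := (IsOpenMap.of_inverse (f' := (· / 4)) (by fun_prop) (fun x => by ring)
    (fun x => by ring)).mapsTo_interior hmaps
  rw [(isOpen_interior.inter isOpen_Iio).interior_eq] at this
  convert this ⟨h, show x / 4 < 1 / 2 by linarith⟩ using 1
  ring

def Z : Set ℝ := Icc 0 (5 / 3) \ interior cantorval

theorem interior_subset_compl_Z : interior cantorval ⊆ Zᶜ := fun _ hx hZ => hZ.2 hx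

theorem Iio_subset_compl_Z : Iio 0 ⊆ Zᶜ := fun _ hx hZ => not_le.2 hx hZ.1.1

theorem div_four_mem_Z {x : ℝ} (hx : x ∈ Z) : x / 4 ∈ Z :=
  ⟨⟨by linarith [hx.1.1], by linarith [hx.1.2]⟩,
    fun h => hx.2 (mem_interior_of_div_four_mem_interior (by linarith [hx.1.2]) h)⟩

theorem div_four_not_mem_Z {x : ℝ} (hx : x ∉ Z) (hx' : x ≤ 5 / 3) : x / 4 ∉ Z := by
  intro h
  have hint : x ∈ interior cantorval := by
    by_contra hint
    exact hx ⟨⟨by linarith [h.1.1], hx'⟩, hint⟩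
  exact h.2 (by simpa using mapsTo_interior_digit_map zero_mem_digits hint)

theorem Ioo_div_four_subset_Z {a b : ℝ} (h : Ioo a b ⊆ Z) : Ioo (a / 4) (b / 4) ⊆ Z := by
  rintro x ⟨hax, hxb⟩
  simpa using div_four_mem_Z (h ⟨by linarith, by linarith⟩ : 4 * x ∈ Z)

theorem Ioo_subset_Z_of_forall_not_mem {a b : ℝ} (ha : 0 ≤ a) (hb : b ≤ 5 / 3)
    (h : ∀ x ∈ Ioo a b, x ∉ cantorval) : Ioo a b ⊆ Z :=
  fun x hx => ⟨⟨ha.trans hx.1.le, hx.2.le.trans hb⟩, fun hint => h x hx (interior_subset hint)⟩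

theorem fst_gap_subset_Z : Ioo (5 / 12 : ℝ) (1 / 2) ⊆ Z :=
  Ioo_subset_Z_of_forall_not_mem (by norm_num) (by norm_num) fun x hx hX => by
    rcases le_five_twelfths_or_mem_Icc_or_five_fourths_le hX with h | ⟨h, h'⟩ | h <;>
      linarith [hx.1, hx.2]

theorem snd_gap_subset_Z : Ioo (7 / 6 : ℝ) (5 / 4) ⊆ Z :=
  Ioo_subset_Z_of_forall_not_mem (by norm_num) (by norm_num) fun x hx hX => by
    rcases le_five_twelfths_or_mem_Icc_or_five_fourths_le hX with h | ⟨h, h'⟩ | h <;>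
      linarith [hx.1, hx.2]

/-- `x + α` is required to lie in `int X`, not merely outside `Z`: unlike `x + α > 5/3`, this
survives the rescaling `x ↦ x / 4`. -/
def HasWitness (α : ℝ) : Prop := ∃ x ∈ Z, x - α ∉ Z ∧ x + α ∈ interior cantorval

theorem HasWitness.div_four {α : ℝ} (hα : 0 < α) (h : HasWitness α) : HasWitness (α / 4) := by
  obtain ⟨x, hx, hl, hr⟩ := h
  refine ⟨x / 4, div_four_mem_Z hx, ?_, ?_⟩
  · rw [show x / 4 - α / 4 = (x - α) / 4 by ring]
    exact div_four_not_mem_Z hl (by linarith [hx.1.2])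
  · rw [show x / 4 + α / 4 = (x + α + 0) / 4 by ring]
    exact mapsTo_interior_digit_map zero_mem_digits hr

theorem hasWitness_of_window {g₁ g₂ a b p q α : ℝ} (hg : Ioo g₁ g₂ ⊆ Z) (hab : Ioo a b ⊆ Zᶜ)
    (hpq : Ioo p q ⊆ interior cantorval)
    (h : max g₁ (max (a + α) (p - α)) < min g₂ (min (b + α) (q - α))) : HasWitness α := by
  obtain ⟨x, hlo, hhi⟩ := exists_between h
  simp only [max_lt_iff, lt_min_iff] at hlo hhi
  exact ⟨x, hg ⟨hlo.1, hhi.1⟩, hab ⟨by linarith, by linarith⟩, hpq ⟨by linarith, by linarith⟩⟩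

theorem hasWitness_of_mem_Ioc {α : ℝ} (hα : α ∈ Ioc (7 / 24) (7 / 6)) : HasWitness α := by
  obtain ⟨hlo, hhi⟩ := hα
  have neg : Ioo (-2 : ℝ) 0 ⊆ Zᶜ := Ioo_subset_Iio_self.trans Iio_subset_compl_Z
  have gap₁ := Ioo_div_four_subset_Z snd_gap_subset_Z
  have gap₂ := Ioo_div_four_subset_Z gap₁
  have pad := Ioo_subset_interior
  have pad₅ := Ioo_digit_map_subset_interior pad five_mem_digits
  have pad₀₂₀ := Ioo_digit_map_subset_interior (Ioo_digit_map_subset_interior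
    (Ioo_digit_map_subset_interior pad zero_mem_digits) two_mem_digits) zero_mem_digits
  have pad₅₃₅ := Ioo_digit_map_subset_interior
    (Ioo_digit_map_subset_interior pad₅ three_mem_digits) five_mem_digits
  rcases lt_or_ge α (35 / 96) with h₁ | h₁
  · exact hasWitness_of_window fst_gap_subset_Z (interior_subset_compl_Z.trans' pad₀₂₀) pad
      (by simp only [max_lt_iff, lt_min_iff]; and_intros <;> linarith)
  rcases lt_or_ge α (17 / 24) with h₂ | h₂
  · exact hasWitness_of_window gap₁ neg pad
      (by simp only [max_lt_iff, lt_min_iff]; and_intros <;> linarith)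
  rcases lt_or_ge α (89 / 96) with h₃ | h₃
  · exact hasWitness_of_window gap₂ neg pad
      (by simp only [max_lt_iff, lt_min_iff]; and_intros <;> linarith)
  rcases lt_or_ge α (13 / 12) with h₄ | h₄
  · exact hasWitness_of_window fst_gap_subset_Z neg pad₅
      (by simp only [max_lt_iff, lt_min_iff]; and_intros <;> linarith)
  rcases lt_or_ge α (107 / 96) with h₅ | h₅
  · exact hasWitness_of_window fst_gap_subset_Z neg pad₅₃₅
      (by simp only [max_lt_iff, lt_min_iff]; and_intros <;> linarith)
  · exact hasWitness_of_window gap₁ neg pad₅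
      (by simp only [max_lt_iff, lt_min_iff]; and_intros <;> linarith)

theorem hasWitness_of_pos_of_le {α : ℝ} (hα : 0 < α) (hα' : α ≤ 7 / 6) : HasWitness α := by
  obtain ⟨n, hn⟩ := pow_unbounded_of_one_lt (7 / 24 / α) (by norm_num : (1 : ℝ) < 4)
  rw [div_lt_iff₀ hα] at hn
  induction n generalizing α with
  | zero => exact hasWitness_of_mem_Ioc ⟨by simpa using hn, hα'⟩
  | succ n ih =>
    rcases lt_or_ge (7 / 24) α with h | h
    · exact hasWitness_of_mem_Ioc ⟨h, hα'⟩
    · have h4α : HasWitness (4 * α) :=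
        ih (by positivity) (by linarith) (by rwa [pow_succ, mul_assoc] at hn)
      simpa using h4α.div_four (by positivity)

theorem not_mem_centerOfDistances_Z_of_gt {α : ℝ} (hα : 7 / 6 < α) :
    α ∉ centerOfDistances Z := by
  obtain ⟨x, hlo, hhi⟩ := exists_between (max_lt (by norm_num : (5 / 12 : ℝ) < 1 / 2)
    (by linarith : 5 / 3 - α < 1 / 2))
  simp only [max_lt_iff] at hlo
  exact not_mem_centerOfDistances (fst_gap_subset_Z ⟨hlo.1, hhi⟩)
    (Iio_subset_compl_Z (show x - α < 0 by linarith))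
    fun h => by linarith [h.1.2]

end Cantorval

theorem stmt15 :
    centerOfDistances (Set.Icc 0 (5 / 3) \ interior cantorval) = {0} := by
  refine eq_singleton_iff_unique_mem.2 ⟨zero_mem_centerOfDistances _, fun α hα => ?_⟩
  by_contra hne
  have hpos : 0 < α := lt_of_le_of_ne hα.1 (Ne.symm hne)
  rcases le_or_gt α (7 / 6) with h | h
  · obtain ⟨x, hx, hl, hr⟩ := Cantorval.hasWitness_of_pos_of_le hpos h
    exact not_mem_centerOfDistances hx hl (Cantorval.interior_subset_compl_Z hr) hα
  · exact Cantorval.not_mem_centerOfDistances_Z_of_gt h hα
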